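/- arXiv:1907.01207 — 2 statements merged into one kernel-verified Lean document; each statement's English description precedes it below -/
import Mathlib

section
/- Let a, x, y be real numbers with a ≥ 2, and suppose that a·y² − 2a·x·y + (2x² + 4a − 2a²) ≤ 0 and x ≥ 4a + √(17(a−2)a). Then y ≥ 8. -/
/-- Let `a, x, y` be real numbers with `a ≥ 2`, and suppose
`a·y² − 2a·x·y + (2x² + 4a − 2a²) ≤ 0` and `x ≥ 4a + √(17(a−2)a)`.
Then `y ≥ 8`. -/
theorem stmt_5 (a x y : ℝ) (ha : 2 ≤ a)
    (h1 : a * y ^ 2 - 2 * a * x * y + (2 * x ^ 2 + 4 * a - 2 * a ^ 2) ≤ 0)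
    (h2 : 4 * a + Real.sqrt (17 * (a - 2) * a) ≤ x) :
    8 ≤ y := by
  set s := Real.sqrt (17 * (a - 2) * a) with hs
  have hnn : (0:ℝ) ≤ 17 * (a - 2) * a := by nlinarith
  have hs0 : 0 ≤ s := Real.sqrt_nonneg _
  have hs2 : s ^ 2 = 17 * (a - 2) * a := Real.sq_sqrt hnn
  have hx : 8 ≤ x := by nlinarith
  -- key: a*(x-8)^2 ≥ (a-2)*(x^2+2a)
  have hkey : (a - 2) * (x ^ 2 + 2 * a) ≤ a * (x - 8) ^ 2 := by nlinarith [sq_nonneg (x - 4*a - s)]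
  by_contra h
  push_neg at h
  have h3 : a * (x - y) ^ 2 ≤ (a - 2) * (x ^ 2 + 2 * a) := by nlinarith
  have hsq : (x - 8) ^ 2 < (x - y) ^ 2 := by nlinarith
  nlinarith [mul_lt_mul_of_pos_left hsq (show (0:ℝ) < a by linarith)]
end

section
/- Let X be a projective K3 surface over an algebraically closed field, A an ample divisor, D a big and nef divisor with A·D ≤ A², and R a (−2)-curve on X. Then the Hodge Index Theorem implies (2·A·D + (A·R)(D·R))² ≥ (2A² + (A·R)²)(2D² + (D·R)²). -/
set_option maxHeartbeats 1000000

/-- Let `X` be a projective K3 surface, with intersection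
pairing `B` (symmetric) on its group `M` of divisor classes.  Let `A` be ample
(so `A² > 0`, and by the Hodge Index Theorem the form is negative semidefinite
on `A^⊥`: hypothesis `hHodge`), let `D` be big and nef with `D² ≥ 2` and
`A·D ≤ A²`, and let `R` be a `(−2)`-curve, `R² = −2`.  Then
`(2·A·D + (A·R)(D·R))² ≥ (2A² + (A·R)²)(2D² + (D·R)²)`. -/
theorem stmt_6 {M : Type*} [AddCommGroup M] [Module ℤ M]
    (B : M →ₗ[ℤ] M →ₗ[ℤ] ℤ) (hsymm : ∀ v w : M, B v w = B w v)
    (A D R : M)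
    (hA : 0 < B A A)
    (hHodge : ∀ v : M, B A v = 0 → B v v ≤ 0)
    (hDnef : 0 ≤ B D D) (hDbig : 2 ≤ B D D)
    (hAD : B A D ≤ B A A)
    (hR : B R R = -2) :
    (2 * B A D + B A R * B D R) ^ 2 ≥
      (2 * B A A + (B A R) ^ 2) * (2 * B D D + (B D R) ^ 2) := by
  have L1 : ∀ (c : ℤ) (x y : M), B (c • x) y = c * B x y := by intro c x y; simp
  have L2 : ∀ (c : ℤ) (x y : M), B x (c • y) = c * B x y := by intro c x y; simp
  have L3 : ∀ (x y z : M), B (x - y) z = B x z - B y z := by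
    intro x y z; rw [map_sub, LinearMap.sub_apply]
  have L4 : ∀ (x y z : M), B x (y - z) = B x y - B x z := by intro x y z; rw [map_sub]
  have hDA : B D A = B A D := hsymm D A
  have hRA : B R A = B A R := hsymm R A
  have hRD : B R D = B D R := hsymm R D
  -- abbreviations for the intersection numbers
  set a := B A A with ha
  set d := B A D with hd
  set r := B A R with hr
  set e := B D D with he
  set s := B D R with hs
  -- projections of D and R onto A⊥
  set u : M := a • D - d • A with hu
  set v : M := a • R - r • A with hv
  have hBAu : B A u = 0 := by
    rw [hu, L4, L2, L2, ← hd, ← ha]; ring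
  have hBAv : B A v = 0 := by
    rw [hv, L4, L2, L2, ← hr, ← ha]; ring
  have huu : B u u = a * (a * e - d ^ 2) := by
    simp only [hu, L3, L4, L1, L2, hDA, ← ha, ← hd, ← he]; ring
  have hvv : B v v = a * (-2 * a - r ^ 2) := by
    simp only [hv, L3, L4, L1, L2, hRA, hR, ← ha, ← hr]; ring
  have huv : B u v = a * (a * s - d * r) := by
    simp only [hu, hv, L3, L4, L1, L2, hRA, hDA, ← ha, ← hd, ← hr, ← hs]; ring
  have huu0 : B u u ≤ 0 := hHodge u hBAu
  have hvv0 : B v v < 0 := by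
    rw [hvv]
    have h : -2 * a - r ^ 2 < 0 := by nlinarith [sq_nonneg r, hA]
    exact mul_neg_of_pos_of_neg hA h
  clear_value u v
  -- Cauchy–Schwarz on A⊥ via w = (B v v) • u - (B u v) • v
  set w : M := (B v v) • u - (B u v) • v with hw
  have hBAw : B A w = 0 := by
    rw [hw, L4, L2, L2, hBAu, hBAv]; ring
  have hvu : B v u = B u v := hsymm v u
  have hww : B w w = B v v * (B u u * B v v - (B u v) ^ 2) := by
    simp only [hw, L3, L4, L1, L2, hvu]; ring
  have hww0 : B w w ≤ 0 := hHodge w hBAw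
  have hCS : (B u v) ^ 2 ≤ B u u * B v v := by
    rw [hww] at hww0
    nlinarith [hvv0, hww0]
  rw [huu, hvv, huv] at hCS
  have hA2 : (0:ℤ) < a ^ 2 := by positivity
  have h1 : a ^ 2 * ((a * s - d * r) ^ 2) ≤ a ^ 2 * ((a * e - d ^ 2) * (-2 * a - r ^ 2)) := by
    have e1 : a ^ 2 * ((a * s - d * r) ^ 2) = (a * (a * s - d * r)) ^ 2 := by ring
    have e2 : a ^ 2 * ((a * e - d ^ 2) * (-2 * a - r ^ 2))
        = a * (a * e - d ^ 2) * (a * (-2 * a - r ^ 2)) := by ring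
    rw [e1, e2]; exact hCS
  have hCS2 : (a * s - d * r) ^ 2 ≤ (a * e - d ^ 2) * (-2 * a - r ^ 2) :=
    le_of_mul_le_mul_left h1 hA2
  have h2 : a * (a * s ^ 2 - 2 * d * r * s + 2 * a * e + e * r ^ 2 - 2 * d ^ 2) ≤ a * 0 := by
    nlinarith [hCS2]
  have h3 : a * s ^ 2 - 2 * d * r * s + 2 * a * e + e * r ^ 2 - 2 * d ^ 2 ≤ 0 :=
    le_of_mul_le_mul_left h2 hA
  nlinarith [h3]
end
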